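/- Let h be a fixed nonzero integer and t > 0 fixed. Then there exists a constant C depending only on t and h such that for every prime p > |h|, with J = (p−1)/2, the extreme angles and average gap satisfy |α_{p−2} − 1/(tJ)| ≤ C/J², |α_1 + 1/(tJ)| ≤ C/J², and |Δ_av − 1/(tJ²)| ≤ C/J³. -/

import Mathlib

open MeasureTheory

noncomputable section

/-- `J = (p-1)/2` as a real number. -/
def Jr (p : ℕ) : ℝ := ((p : ℝ) - 1) / 2

/-- The parameters `n` of the neighbor-flips modular curve `A(p,h)`:
`n ∈ ℤ/pℤ` with `n ≠ 0` and `n ≠ -h`. -/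
def curveIdx (p : ℕ) [NeZero p] (h : ℤ) : Finset (ZMod p) :=
  Finset.univ.filter (fun n => n ≠ 0 ∧ n ≠ -(h : ZMod p))

/-- The integer representative of `m ∈ ℤ/pℤ` in `[-(p-1)/2, (p-1)/2]` (for odd `p`). -/
def rep (p : ℕ) (m : ZMod p) : ℤ :=
  if (m.val : ℤ) ≤ ((p : ℤ) - 1) / 2 then (m.val : ℤ) else (m.val : ℤ) - (p : ℤ)

/-- The angle under which the observer placed at `(-tJ², 0)` sees the point
`([n⁻¹], [(n+h)⁻¹])` of the curve `A(p,h)`. -/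
def angleOf (p : ℕ) [NeZero p] (h : ℤ) (t : ℝ) (n : ZMod p) : ℝ :=
  Real.arctan ((rep p (n + (h : ZMod p))⁻¹ : ℝ) / ((rep p n⁻¹ : ℝ) + t * (Jr p) ^ 2))

/-- `α 0 ≤ α 1 ≤ ⋯ ≤ α (p-3)` is the list, in increasing order, of the `p - 2` angles
under which the observer at `(-tJ², 0)` sees the points of `A(p,h)`
(the angles of the paper are `α_j = α (j-1)` for `1 ≤ j ≤ p-2`). -/
def IsSortedAngles (p : ℕ) [NeZero p] (h : ℤ) (t : ℝ) (α : ℕ → ℝ) : Prop :=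
  Multiset.map (angleOf p h t) (curveIdx p h).val = Multiset.map α (Multiset.range (p - 2)) ∧
  ∀ i j : ℕ, i ≤ j → j < p - 2 → α i ≤ α j

/-- The gap distribution function `G_{t,p,h}(λ)`, expressed in terms of the sorted
sequence of angles `α`: the proportion, among the `p - 3` consecutive gaps, of those of
size at least `λ` times the average gap `Δ_av = (α_max - α_min)/(p-3)`. -/
def Gval (p : ℕ) (lam : ℝ) (α : ℕ → ℝ) : ℝ :=
  (((Finset.range (p - 3)).filter
      (fun j => lam * ((α (p - 3) - α 0) / ((p : ℝ) - 3)) ≤ α (j + 1) - α j)).card : ℝ)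
    / ((p : ℝ) - 3)

/-- The limit domain `Ω_D(t,λ) ⊆ [-1/2,1/2]^{2D+1}`, with coordinates
`(x, y_{-D+1}, …, y_D)`: the coordinate of index `0` is `x` and the coordinate of index
`i ∈ {1, …, 2D}` is `y_j` with `j = i - D`.  It consists of the points with `x ≥ 0` such
that `y_j ∉ [y_0 + (j-λ)t/(4x), y_0 + j·t/(4x)]` for all `j ≠ 0`. -/
def Omega (D : ℕ) (t lam : ℝ) : Set (Fin (2 * D + 1) → ℝ) :=
  {v | (∀ i, v i ∈ Set.Icc (-(1 : ℝ) / 2) (1 / 2)) ∧ 0 ≤ v ⟨0, by omega⟩ ∧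
    ∀ i : Fin (2 * D + 1), (i : ℕ) ≠ 0 → (i : ℕ) ≠ D →
      v i ∉ Set.Icc
        (v ⟨D, by omega⟩ + (((i : ℕ) : ℝ) - (D : ℝ) - lam) * t / (4 * v ⟨0, by omega⟩))
        (v ⟨D, by omega⟩ + (((i : ℕ) : ℝ) - (D : ℝ)) * t / (4 * v ⟨0, by omega⟩))}

/-!
All points of `A(p,h)` lie in the square `[-J, J]²`, so every angle has tangent at most
`J / (tJ² - J) = 1 / (tJ - 1)` in absolute value. Conversely, `(n + h)⁻¹` takes every value
of `ℤ/pℤ` except `0` and `h⁻¹`, so some point has second coordinate `J` or `J - 1`, and some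
has `-J` or `-(J - 1)`; these are seen under angles beyond `± arctan ((J - 1) / (tJ² + J))`.
Both bounds are `1/(tJ) + O(1/J²)`, which pins down `α_1` and `α_{p-2}`, and dividing their
difference by `p - 3 = 2(J - 1)` gives `Δ_av`. Small primes are absorbed into the constant,
all angles lying in `(-π/2, π/2)`.
-/

namespace Real

lemma arctan_le_self {x : ℝ} (hx : 0 ≤ x) : arctan x ≤ x := by
  simpa only [tan_arctan] using le_tan (arctan_nonneg.2 hx) (arctan_lt_pi_div_two x)

lemma sub_pow_three_le_arctan {x : ℝ} (hx : 0 ≤ x) : x - x ^ 3 ≤ arctan x := by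
  have hsin : x / √(1 + x ^ 2) ≤ arctan x := sin_arctan x ▸ sin_le (arctan_nonneg.2 hx)
  have hsqrt : √(1 + x ^ 2) ≤ 1 + x ^ 2 := sqrt_le_self_iff.2 (Or.inr (by nlinarith))
  have hdiv : x / (1 + x ^ 2) ≤ x / √(1 + x ^ 2) :=
    div_le_div_of_nonneg_left hx (by positivity) hsqrt
  have hcube : x - x ^ 3 ≤ x / (1 + x ^ 2) := by
    rw [le_div_iff₀ (by positivity)]
    nlinarith [pow_nonneg hx 5]
  linarith

end Real

section AngleEstimates

variable {t J x y : ℝ}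

lemma div_add_mul_sq_le (hJ : 0 < J) (htJ : 1 < t * J) (hx : |x| ≤ J) (hy : |y| ≤ J) :
    |y / (x + t * J ^ 2)| ≤ 1 / (t * J - 1) := by
  have hden : J * (t * J - 1) ≤ x + t * J ^ 2 := by nlinarith [abs_le.1 hx]
  have hpos : 0 < J * (t * J - 1) := by nlinarith
  rw [abs_div, abs_of_pos (hpos.trans_le hden), div_le_div_iff₀ (hpos.trans_le hden) (by linarith)]
  nlinarith

lemma le_div_add_mul_sq (hJ : 1 ≤ J) (htJ : 1 < t * J) (hx : |x| ≤ J) (hy : J - 1 ≤ y) :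
    (J - 1) / (t * J ^ 2 + J) ≤ y / (x + t * J ^ 2) := by
  have hden : J * (t * J - 1) ≤ x + t * J ^ 2 := by nlinarith [abs_le.1 hx]
  have hpos : 0 < J * (t * J - 1) := by nlinarith
  rw [div_le_div_iff₀ (by nlinarith) (hpos.trans_le hden)]
  nlinarith [mul_le_mul_of_nonneg_left (abs_le.1 hx).2 (by linarith : 0 ≤ J - 1)]

lemma arctan_one_div_sub_one_le (ht : 0 < t) (htJ : 2 ≤ t * J) :
    Real.arctan (1 / (t * J - 1)) ≤ 1 / (t * J) + (2 + t) / t ^ 2 / J ^ 2 := by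
  have hs : 0 < t * J := by linarith
  refine (Real.arctan_le_self (div_nonneg zero_le_one (by linarith))).trans ?_
  rw [div_div, ← mul_pow, div_add_div _ _ hs.ne' (by positivity),
    div_le_div_iff₀ (by linarith) (by positivity)]
  nlinarith [mul_nonneg hs.le (by linarith : 0 ≤ t * J - 2),
    mul_nonneg (mul_nonneg ht.le hs.le) (by linarith : 0 ≤ t * J - 1)]

lemma le_arctan_div_mul_sq_add (ht : 0 < t) (hJ : 1 ≤ J) (htJ : 2 ≤ t * J) :
    1 / (t * J) - (2 + t) / t ^ 2 / J ^ 2 ≤ Real.arctan ((J - 1) / (t * J ^ 2 + J)) := by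
  have hs : 0 < t * J := by linarith
  set r := (J - 1) / (t * J ^ 2 + J)
  have hr : 0 ≤ r := div_nonneg (by linarith) (by positivity)
  have hru : r ≤ 1 / (t * J) := by
    rw [div_le_div_iff₀ (by positivity) hs]
    nlinarith
  have hrl : 1 / (t * J) - (1 + t) / t ^ 2 / J ^ 2 ≤ r := by
    rw [div_div, ← mul_pow, div_sub_div _ _ hs.ne' (by positivity),
      div_le_div_iff₀ (by positivity) (by positivity)]
    nlinarith
  have hcube : r ^ 3 ≤ 1 / t ^ 2 / J ^ 2 := by
    have hr1 : r ≤ 1 := hru.trans ((div_le_one hs).2 (by linarith))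
    calc r ^ 3 ≤ r ^ 2 := pow_le_pow_of_le_one hr hr1 (by norm_num)
      _ ≤ (1 / (t * J)) ^ 2 := pow_le_pow_left₀ hr hru 2
      _ = 1 / t ^ 2 / J ^ 2 := by ring
  have := Real.sub_pow_three_le_arctan hr
  have : (2 + t) / t ^ 2 / J ^ 2 = (1 + t) / t ^ 2 / J ^ 2 + 1 / t ^ 2 / J ^ 2 := by ring
  linarith

lemma abs_div_sub_le_of_abs_sub_le {a b K : ℝ} (ht : 0 < t) (hJ : 2 ≤ J)
    (ha : |a - 1 / (t * J)| ≤ K / J ^ 2) (hb : |b + 1 / (t * J)| ≤ K / J ^ 2) :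
    |(a - b) / (2 * J - 2) - 1 / (t * J ^ 2)| ≤ (2 * K + 2 / t) / J ^ 3 := by
  have hJ0 : 0 < J := by linarith
  have hJ1 : 0 < J - 1 := by linarith
  have hsplit : (a - b) / (2 * J - 2) - 1 / (t * J ^ 2) =
      ((a - 1 / (t * J)) - (b + 1 / (t * J))) / (2 * J - 2) + 1 / (t * J ^ 2 * (J - 1)) := by
    rw [show 2 * J - 2 = 2 * (J - 1) by ring]
    field_simp
    ring
  have hfirst : |((a - 1 / (t * J)) - (b + 1 / (t * J))) / (2 * J - 2)| ≤ 2 * K / J ^ 3 := by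
    have hd : |(a - 1 / (t * J)) - (b + 1 / (t * J))| ≤ 2 * K / J ^ 2 :=
      (abs_sub _ _).trans ((add_le_add ha hb).trans_eq (by ring))
    rw [abs_div, abs_of_pos (by linarith : (0 : ℝ) < 2 * J - 2)]
    calc _ ≤ 2 * K / J ^ 2 / J := div_le_div₀ ((abs_nonneg _).trans hd) hd hJ0 (by linarith)
      _ = 2 * K / J ^ 3 := by ring
  have hsecond : |1 / (t * J ^ 2 * (J - 1))| ≤ 2 / t / J ^ 3 := by
    rw [abs_of_pos (by positivity), div_div, div_le_div_iff₀ (by positivity) (by positivity)]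
    nlinarith [mul_pos ht (pow_pos hJ0 2)]
  calc _ ≤ _ := hsplit ▸ abs_add_le _ _
    _ ≤ 2 * K / J ^ 3 + 2 / t / J ^ 3 := add_le_add hfirst hsecond
    _ = (2 * K + 2 / t) / J ^ 3 := by ring

lemma abs_le_div_pow_of_le_of_large {X B K C J₀ : ℝ} {e : ℕ} (he : e ≤ 3) (hJ : 1 ≤ J)
    (hJ₀ : 1 ≤ J₀) (hKC : K ≤ C) (hBC : B * J₀ ^ 3 ≤ C) (hB : |X| ≤ B)
    (hK : J₀ ≤ J → |X| ≤ K / J ^ e) : |X| ≤ C / J ^ e := by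
  rcases le_or_gt J₀ J with hlarge | hsmall
  · exact (hK hlarge).trans (by gcongr)
  · rw [le_div_iff₀ (by positivity)]
    calc |X| * J ^ e ≤ B * J₀ ^ 3 := by
          gcongr
          · exact (abs_nonneg X).trans hB
          · exact (pow_le_pow_left₀ (by linarith) hsmall.le e).trans (pow_le_pow_right₀ hJ₀ he)
      _ ≤ C := hBC

end AngleEstimates

section Representatives

variable {p : ℕ}

lemma Jr_eq_intCast (hp : Odd p) : Jr p = ((((p : ℤ) - 1) / 2 : ℤ) : ℝ) := by
  obtain ⟨k, rfl⟩ := hp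
  rw [show ((2 * k + 1 : ℕ) : ℤ) - 1 = 2 * k by push_cast; ring,
    Int.mul_ediv_cancel_left _ two_ne_zero, Jr]
  push_cast
  ring

lemma abs_rep_le [NeZero p] (hp : Odd p) (m : ZMod p) : |rep p m| ≤ ((p : ℤ) - 1) / 2 := by
  have hv : (m.val : ℤ) < p := by exact_mod_cast ZMod.val_lt m
  obtain ⟨k, rfl⟩ := hp
  unfold rep
  push_cast at hv ⊢
  split_ifs <;> rw [abs_le] <;> omega

lemma abs_rep_le_Jr [NeZero p] (hp : Odd p) (m : ZMod p) : |(rep p m : ℝ)| ≤ Jr p := by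
  rw [Jr_eq_intCast hp, ← Int.cast_abs]
  exact_mod_cast abs_rep_le hp m

lemma rep_intCast [NeZero p] {a : ℤ} (ha : |a| ≤ ((p : ℤ) - 1) / 2) : rep p a = a := by
  have hp : (0 : ℤ) < p := by exact_mod_cast Nat.pos_of_neZero p
  have hval : ((a : ZMod p).val : ℤ) = a % p := ZMod.val_intCast a
  rw [abs_le] at ha
  unfold rep
  rw [hval]
  rcases le_or_gt 0 a with ha0 | ha0
  · rw [Int.emod_eq_of_lt ha0 (by omega), if_pos ha.2]
  · rw [← Int.add_mul_emod_self_right a 1 p, one_mul, Int.emod_eq_of_lt (by omega) (by omega),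
      if_neg (by omega)]
    ring

lemma one_le_Jr (hp : 2 < p) : 1 ≤ Jr p := by
  have : (3 : ℝ) ≤ p := by exact_mod_cast hp
  rw [Jr]
  linarith

lemma odd_of_two_le_Jr [Fact p.Prime] (hJ : 2 ≤ Jr p) : Odd p :=
  (Fact.out : p.Prime).odd_of_ne_two (by rintro rfl; norm_num [Jr] at hJ)

end Representatives

lemma exists_mem_curveIdx_inv_add_eq {p : ℕ} [Fact p.Prime] (h : ℤ) {c : ZMod p} (hc : c ≠ 0)
    (hch : c ≠ (h : ZMod p)⁻¹) : ∃ n ∈ curveIdx p h, (n + h)⁻¹ = c := by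
  refine ⟨c⁻¹ - h, ?_, by rw [sub_add_cancel, inv_inv]⟩
  simp only [curveIdx, Finset.mem_filter, Finset.mem_univ, true_and, sub_eq_zero,
    sub_eq_neg_self, inv_eq_zero, ne_eq]
  exact ⟨fun he => hch (by rw [← he, inv_inv]), hc⟩

lemma exists_mem_curveIdx_rep_inv_add_eq_or {p : ℕ} [Fact p.Prime] (h : ℤ) {a b : ℤ}
    (ha0 : a ≠ 0) (hb0 : b ≠ 0) (hab : a ≠ b)
    (ha : |a| ≤ ((p : ℤ) - 1) / 2) (hb : |b| ≤ ((p : ℤ) - 1) / 2) :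
    ∃ n ∈ curveIdx p h, rep p (n + h)⁻¹ = a ∨ rep p (n + h)⁻¹ = b := by
  have hrep0 : rep p 0 = 0 := by
    have := (Fact.out : p.Prime).one_lt
    simp only [rep, ZMod.val_zero, CharP.cast_eq_zero, ite_eq_left_iff, not_le]
    omega
  have hcast {c : ℤ} (hc0 : c ≠ 0) (hc : |c| ≤ ((p : ℤ) - 1) / 2) : (c : ZMod p) ≠ 0 :=
    fun he => hc0 (by rw [← rep_intCast hc, he, hrep0])
  by_cases hah : (a : ZMod p) = (h : ZMod p)⁻¹
  · have hbh : (b : ZMod p) ≠ (h : ZMod p)⁻¹ :=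
      fun he => hab (by rw [← rep_intCast ha, ← rep_intCast hb, hah, he])
    obtain ⟨n, hn, he⟩ := exists_mem_curveIdx_inv_add_eq h (hcast hb0 hb) hbh
    exact ⟨n, hn, Or.inr (by rw [he, rep_intCast hb])⟩
  · obtain ⟨n, hn, he⟩ := exists_mem_curveIdx_inv_add_eq h (hcast ha0 ha) hah
    exact ⟨n, hn, Or.inl (by rw [he, rep_intCast ha])⟩

section SortedAngles

variable {p : ℕ} {h : ℤ} {t : ℝ} {α : ℕ → ℝ}

lemma IsSortedAngles.exists_angleOf_eq [NeZero p] (hα : IsSortedAngles p h t α) {i : ℕ}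
    (hi : i < p - 2) : ∃ n ∈ curveIdx p h, α i = angleOf p h t n := by
  have hmem : α i ∈ Multiset.map α (Multiset.range (p - 2)) :=
    Multiset.mem_map_of_mem α (Multiset.mem_range.2 hi)
  rw [← hα.1] at hmem
  obtain ⟨n, hn, he⟩ := Multiset.mem_map.1 hmem
  exact ⟨n, hn, he.symm⟩

lemma IsSortedAngles.angleOf_mem_Icc [NeZero p] (hα : IsSortedAngles p h t α) {n : ZMod p}
    (hn : n ∈ curveIdx p h) : angleOf p h t n ∈ Set.Icc (α 0) (α (p - 3)) := by
  have hmem : angleOf p h t n ∈ Multiset.map (angleOf p h t) (curveIdx p h).val :=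
    Multiset.mem_map_of_mem _ hn
  rw [hα.1] at hmem
  obtain ⟨i, hi, hαi⟩ := Multiset.mem_map.1 hmem
  rw [Multiset.mem_range] at hi
  rw [← hαi]
  exact ⟨hα.2 0 i i.zero_le hi, hα.2 i (p - 3) (by omega) (by omega)⟩

lemma IsSortedAngles.abs_le_pi_div_two [NeZero p] (hα : IsSortedAngles p h t α) {i : ℕ}
    (hi : i < p - 2) : |α i| ≤ Real.pi / 2 := by
  obtain ⟨n, -, hn⟩ := hα.exists_angleOf_eq hi
  rw [hn, angleOf, abs_le]
  exact ⟨(Real.neg_pi_div_two_lt_arctan _).le, (Real.arctan_lt_pi_div_two _).le⟩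

lemma abs_angleOf_le [NeZero p] (hp : Odd p) (hJ : 0 < Jr p) (htJ : 1 < t * Jr p) (n : ZMod p) :
    |angleOf p h t n| ≤ Real.arctan (1 / (t * Jr p - 1)) := by
  have hq := abs_le.1 (div_add_mul_sq_le hJ htJ (abs_rep_le_Jr hp n⁻¹)
    (abs_rep_le_Jr hp (n + h)⁻¹))
  rw [angleOf, abs_le, ← Real.arctan_neg]
  exact ⟨Real.arctan_mono hq.1, Real.arctan_mono hq.2⟩

lemma exists_angleOf_near_extremes [Fact p.Prime] (hJ : 2 ≤ Jr p)
    (htJ : 1 < t * Jr p) :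
    (∃ n ∈ curveIdx p h, Real.arctan ((Jr p - 1) / (t * Jr p ^ 2 + Jr p)) ≤ angleOf p h t n) ∧
    ∃ n ∈ curveIdx p h, angleOf p h t n ≤ -Real.arctan ((Jr p - 1) / (t * Jr p ^ 2 + Jr p)) := by
  have hp := odd_of_two_le_Jr hJ
  set k : ℤ := ((p : ℤ) - 1) / 2
  have hkJ : (k : ℝ) = Jr p := (Jr_eq_intCast hp).symm
  have hk : 2 ≤ k := by exact_mod_cast hkJ ▸ hJ
  have hbound (n : ZMod p) (y : ℝ) (hy : Jr p - 1 ≤ y) :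
      Real.arctan ((Jr p - 1) / (t * Jr p ^ 2 + Jr p)) ≤
        Real.arctan (y / ((rep p n⁻¹ : ℝ) + t * Jr p ^ 2)) :=
    Real.arctan_mono (le_div_add_mul_sq (by linarith) htJ (abs_rep_le_Jr hp n⁻¹) hy)
  constructor
  · obtain ⟨n, hn, hrep⟩ := exists_mem_curveIdx_rep_inv_add_eq_or (p := p) h (a := k) (b := k - 1)
      (by omega) (by omega) (by omega) (by rw [abs_le]; omega) (by rw [abs_le]; omega)
    refine ⟨n, hn, hbound n _ ?_⟩
    rcases hrep with hrep | hrep <;> rw [hrep, ← hkJ] <;> push_cast <;> linarith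
  · obtain ⟨n, hn, hrep⟩ := exists_mem_curveIdx_rep_inv_add_eq_or (p := p) h (a := -k)
      (b := -(k - 1)) (by omega) (by omega) (by omega) (by rw [abs_le]; omega)
      (by rw [abs_le]; omega)
    refine ⟨n, hn, ?_⟩
    have := hbound n (-(rep p (n + h)⁻¹ : ℝ)) ?_
    · rwa [neg_div, Real.arctan_neg, le_neg] at this
    rcases hrep with hrep | hrep <;> rw [hrep, ← hkJ] <;> push_cast <;> linarith

lemma IsSortedAngles.abs_extremes_sub_le [Fact p.Prime] (hα : IsSortedAngles p h t α)
    (ht : 0 < t) (hJ : 2 ≤ Jr p) (htJ : 2 ≤ t * Jr p) :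
    |α (p - 3) - 1 / (t * Jr p)| ≤ (2 + t) / t ^ 2 / Jr p ^ 2 ∧
      |α 0 + 1 / (t * Jr p)| ≤ (2 + t) / t ^ 2 / Jr p ^ 2 := by
  have hp5 : 5 ≤ p := by
    have : (5 : ℝ) ≤ p := by rw [Jr] at hJ; linarith
    exact_mod_cast this
  obtain ⟨nM, -, hM⟩ := hα.exists_angleOf_eq (i := p - 3) (by omega)
  obtain ⟨nm, -, hm⟩ := hα.exists_angleOf_eq (i := 0) (by omega)
  have hp := odd_of_two_le_Jr hJ
  have hMle := abs_le.1 (abs_angleOf_le (h := h) (t := t) hp (by linarith) (by linarith) nM)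
  have hmle := abs_le.1 (abs_angleOf_le (h := h) (t := t) hp (by linarith) (by linarith) nm)
  obtain ⟨⟨n₁, hn₁, h₁⟩, n₂, hn₂, h₂⟩ :=
    exists_angleOf_near_extremes (h := h) (t := t) hJ (by linarith)
  have hM₁ := (hα.angleOf_mem_Icc hn₁).2
  have hm₂ := (hα.angleOf_mem_Icc hn₂).1
  have hup := arctan_one_div_sub_one_le ht htJ
  have hlow := le_arctan_div_mul_sq_add ht (by linarith) htJ
  rw [← hM] at hMle
  rw [← hm] at hmle
  constructor <;> rw [abs_le] <;> constructor <;> linarith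

lemma IsSortedAngles.abs_avg_gap_le [Fact p.Prime] (hα : IsSortedAngles p h t α) (hp : 2 < p) :
    |(α (p - 3) - α 0) / ((p : ℝ) - 3)| ≤ Real.pi / 2 := by
  have hodd : Odd p := (Fact.out : p.Prime).odd_of_ne_two (by omega)
  rcases (by obtain ⟨k, rfl⟩ := hodd; omega : p = 3 ∨ 5 ≤ p) with rfl | hp5
  · -- for `p = 3` the average gap is `0 / 0 = 0`
    norm_num
    positivity
  · have hM := abs_le.1 (hα.abs_le_pi_div_two (i := p - 3) (by omega))
    have hm := abs_le.1 (hα.abs_le_pi_div_two (i := 0) (by omega))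
    have hden : (2 : ℝ) ≤ p - 3 := by
      have : (5 : ℝ) ≤ p := by exact_mod_cast hp5
      linarith
    rw [abs_div, abs_of_pos (by linarith : (0 : ℝ) < p - 3), div_le_iff₀ (by linarith), abs_le]
    constructor <;> nlinarith [Real.pi_pos]

lemma IsSortedAngles.abs_sub_le_of_two_lt [Fact p.Prime] (hα : IsSortedAngles p h t α)
    (ht : 0 < t) (hp : 2 < p) :
    |α (p - 3) - 1 / (t * Jr p)| ≤ Real.pi / 2 + 1 / t ∧
      |α 0 + 1 / (t * Jr p)| ≤ Real.pi / 2 + 1 / t ∧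
      |(α (p - 3) - α 0) / ((p : ℝ) - 3) - 1 / (t * Jr p ^ 2)| ≤ Real.pi / 2 + 1 / t := by
  have hJ := one_le_Jr hp
  have hu : |1 / (t * Jr p)| ≤ 1 / t := by
    rw [abs_of_pos (one_div_pos.2 (mul_pos ht (by linarith)))]
    exact one_div_le_one_div_of_le ht (le_mul_of_one_le_right ht.le hJ)
  have hu2 : |1 / (t * Jr p ^ 2)| ≤ 1 / t := by
    rw [abs_of_pos (one_div_pos.2 (mul_pos ht (by positivity)))]
    exact one_div_le_one_div_of_le ht (le_mul_of_one_le_right ht.le (one_le_pow₀ hJ))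
  exact ⟨(abs_sub _ _).trans (add_le_add (hα.abs_le_pi_div_two (by omega)) hu),
    (abs_add_le _ _).trans (add_le_add (hα.abs_le_pi_div_two (by omega)) hu),
    (abs_sub _ _).trans (add_le_add (hα.abs_avg_gap_le hp) hu2)⟩

lemma IsSortedAngles.abs_sub_le_of_large [Fact p.Prime] (hα : IsSortedAngles p h t α)
    (ht : 0 < t) (hJ : 2 + 2 / t ≤ Jr p) :
    |α (p - 3) - 1 / (t * Jr p)| ≤ (2 * ((2 + t) / t ^ 2) + 2 / t) / Jr p ^ 2 ∧
      |α 0 + 1 / (t * Jr p)| ≤ (2 * ((2 + t) / t ^ 2) + 2 / t) / Jr p ^ 2 ∧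
      |(α (p - 3) - α 0) / ((p : ℝ) - 3) - 1 / (t * Jr p ^ 2)| ≤
        (2 * ((2 + t) / t ^ 2) + 2 / t) / Jr p ^ 3 := by
  have hJ2 : 2 ≤ Jr p := by linarith [div_pos two_pos ht]
  have htJ : 2 ≤ t * Jr p := by
    have : t * (2 + 2 / t) = 2 * t + 2 := by
      rw [mul_add, mul_div_cancel₀ _ ht.ne']
      ring
    nlinarith
  obtain ⟨hM, hm⟩ := hα.abs_extremes_sub_le ht hJ2 htJ
  have hK : (2 + t) / t ^ 2 / Jr p ^ 2 ≤ (2 * ((2 + t) / t ^ 2) + 2 / t) / Jr p ^ 2 := by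
    gcongr
    linarith [div_pos two_pos ht, div_nonneg (by linarith : (0 : ℝ) ≤ 2 + t) (sq_nonneg t)]
  refine ⟨hM.trans hK, hm.trans hK, ?_⟩
  rw [show (p : ℝ) - 3 = 2 * Jr p - 2 by rw [Jr]; ring]
  exact abs_div_sub_le_of_abs_sub_le ht hJ2 hM hm

end SortedAngles

theorem stmt13_general (h : ℤ) (t : ℝ) (ht : 0 < t) :
    ∃ C : ℝ, ∀ (p : ℕ) [Fact p.Prime], h.natAbs < p →
      ∀ α : ℕ → ℝ, IsSortedAngles p h t α →
        (∀ i : ℕ, i < p - 2 →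
          (i = p - 3 → |α i - 1 / (t * Jr p)| ≤ C / (Jr p) ^ 2) ∧
          (i = 0 → |α i + 1 / (t * Jr p)| ≤ C / (Jr p) ^ 2)) ∧
        (2 < p →
          |(α (p - 3) - α 0) / ((p : ℝ) - 3) - 1 / (t * (Jr p) ^ 2)| ≤ C / (Jr p) ^ 3) := by
  have hJ₀ : 1 ≤ 2 + 2 / t := by linarith [div_pos two_pos ht]
  set C := max (2 * ((2 + t) / t ^ 2) + 2 / t) ((Real.pi / 2 + 1 / t) * (2 + 2 / t) ^ 3)
  refine ⟨C, fun p _ _ α hα => ?_⟩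
  have key (hp : 2 < p) : |α (p - 3) - 1 / (t * Jr p)| ≤ C / Jr p ^ 2 ∧
      |α 0 + 1 / (t * Jr p)| ≤ C / Jr p ^ 2 ∧
      |(α (p - 3) - α 0) / ((p : ℝ) - 3) - 1 / (t * Jr p ^ 2)| ≤ C / Jr p ^ 3 := by
    have hJ := one_le_Jr hp
    obtain ⟨hM, hm, hgap⟩ := hα.abs_sub_le_of_two_lt ht hp
    have hlarge := hα.abs_sub_le_of_large ht
    exact ⟨abs_le_div_pow_of_le_of_large (by norm_num) hJ hJ₀ (le_max_left _ _)
        (le_max_right _ _) hM fun hJ₀J => (hlarge hJ₀J).1,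
      abs_le_div_pow_of_le_of_large (by norm_num) hJ hJ₀ (le_max_left _ _)
        (le_max_right _ _) hm fun hJ₀J => (hlarge hJ₀J).2.1,
      abs_le_div_pow_of_le_of_large le_rfl hJ hJ₀ (le_max_left _ _)
        (le_max_right _ _) hgap fun hJ₀J => (hlarge hJ₀J).2.2⟩
  exact ⟨fun i hi => ⟨fun hi' => hi' ▸ (key (by omega)).1, fun hi' => hi' ▸ (key (by omega)).2.1⟩,
    fun hp => (key hp).2.2⟩

/-- for fixed nonzero `h` and fixed `t > 0` there is a constant
`C = C(t,h)` such that for every prime `p > |h|`, with `J = (p-1)/2`, the extreme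
angles satisfy `|α_{p-2} - 1/(tJ)| ≤ C/J²` and `|α_1 + 1/(tJ)| ≤ C/J²`, and the average
gap satisfies `|Δ_av - 1/(tJ²)| ≤ C/J³`.  (In the indexing of `IsSortedAngles`,
`α_1 = α 0` and `α_{p-2} = α (p-3)`; the guards `i < p - 2` and `2 < p` merely ensure
that these quantities are defined.) -/
theorem stmt13 (h : ℤ) (hh : h ≠ 0) (t : ℝ) (ht : 0 < t) :
    ∃ C : ℝ, ∀ (p : ℕ) [Fact p.Prime], h.natAbs < p →
      ∀ α : ℕ → ℝ, IsSortedAngles p h t α →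
        (∀ i : ℕ, i < p - 2 →
          (i = p - 3 → |α i - 1 / (t * Jr p)| ≤ C / (Jr p) ^ 2) ∧
          (i = 0 → |α i + 1 / (t * Jr p)| ≤ C / (Jr p) ^ 2)) ∧
        (2 < p →
          |(α (p - 3) - α 0) / ((p : ℝ) - 3) - 1 / (t * (Jr p) ^ 2)| ≤ C / (Jr p) ^ 3) :=
  stmt13_general h t ht
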